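/- arXiv:1805.10998 — 2 statements merged into one kernel-verified Lean document; each statement's English description precedes it below -/
import Mathlib

section
/- Let γ_k(x) = Σ_i γ(k,i) x^i ∈ ℚ[x]. Then for every k ≥ 0, γ_{k+1}(x) = (k(k+1)/2 − kx + x²)·x·γ_k(x) − (k + (k−2)x − 2x²)·x²·γ_k′(x) + ((1+x)²x³/2)·γ_k″(x), where ′ denotes the formal derivative of polynomials. -/
/-!
On a monomial the differential operator on the right acts by
`xʲ ↦ C(j-k, 2) xʲ⁺¹ + (j+1)(j-k) xʲ⁺² + C(j+2, 2) xʲ⁺³`,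
so the coefficient of `xⁿ` in its value on `γ_k` is exactly the right-hand side of the
recurrence defining `γ(k+1, n)`. To compare coefficients without truncated subtraction,
the coefficients of `p * X ^ m`, `p' * X ^ (m+1)` and `p'' * X ^ (m+2)` are read off an
integer-indexed coefficient function of `p` that vanishes at negative indices.
-/

open Polynomial

/-- For an integer `m`, the binomial coefficient `C(m, 2) = m(m−1)/2`. -/
def c2 (m : ℤ) : ℤ := m * (m - 1) / 2

/-- The coefficients `γ(k, i)`; note `gam 0 i = δ_{i,0}` and `gam k i = 0` for `i < 0`. -/
def gam : ℕ → ℤ → ℤ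
  | 0, i => if i = 0 then 1 else 0
  | k + 1, i =>
      c2 (i - (k : ℤ) - 1) * gam k (i - 1) +
        (i - 1) * (i - (k : ℤ) - 2) * gam k (i - 2) +
        c2 (i - 1) * gam k (i - 3)

/-- The polynomial `γ_k(x) = Σ_i γ(k,i) xⁱ` in `ℚ[x]` (the coefficients `γ(k,i)`
vanish for `i > 3k`, so the sum below captures all of them). -/
noncomputable def gammaPoly (k : ℕ) : Polynomial ℚ :=
  ∑ i ∈ Finset.range (3 * k + 1), Polynomial.C ((gam k (i : ℤ) : ℚ)) * Polynomial.X ^ i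

namespace Polynomial

variable {R : Type*} [CommRing R] {p : R[X]} {g : ℤ → R}

theorem coeff_mul_X_pow_of_coeff_eq (hp : ∀ n : ℕ, p.coeff n = g n) (hg : ∀ i < 0, g i = 0)
    (m n : ℕ) : (p * X ^ m).coeff n = g (n - m) := by
  rw [coeff_mul_X_pow']
  split_ifs with h
  · rw [hp, Nat.cast_sub h]
  · rw [hg _ (by omega)]

theorem coeff_derivative_of_coeff_eq (hp : ∀ n : ℕ, p.coeff n = g n) (n : ℕ) :
    (derivative p).coeff n = ((n : R) + 1) * g (n + 1) := by
  rw [coeff_derivative, hp, mul_comm]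
  push_cast
  rfl

theorem mul_apply_add_one_eq_zero_of_neg (hg : ∀ i < 0, g i = 0) {i : ℤ} (hi : i < 0) :
    ((i : R) + 1) * g (i + 1) = 0 := by
  rcases (show i = -1 ∨ i + 1 < 0 by omega) with rfl | hi'
  · simp
  · rw [hg _ hi', mul_zero]

theorem coeff_derivative_mul_X_pow_succ_of_coeff_eq (hp : ∀ n : ℕ, p.coeff n = g n)
    (hg : ∀ i < 0, g i = 0) (m n : ℕ) :
    (derivative p * X ^ (m + 1)).coeff n = ((n : R) - m) * g (n - m) := by
  rw [coeff_mul_X_pow_of_coeff_eq (g := fun i => ((i : R) + 1) * g (i + 1))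
    (by simpa using coeff_derivative_of_coeff_eq hp) (fun _ => mul_apply_add_one_eq_zero_of_neg hg)]
  have hshift : (n : ℤ) - (m + 1 : ℕ) + 1 = n - m := by push_cast; ring
  rw [hshift]
  push_cast
  ring

theorem coeff_derivative_derivative_mul_X_pow_add_two_of_coeff_eq
    (hp : ∀ n : ℕ, p.coeff n = g n) (hg : ∀ i < 0, g i = 0) (m n : ℕ) :
    (derivative (derivative p) * X ^ (m + 2)).coeff n =
      ((n : R) - m) * ((n : R) - m - 1) * g (n - m) := by
  rw [coeff_derivative_mul_X_pow_succ_of_coeff_eq (g := fun i => ((i : R) + 1) * g (i + 1))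
    (by simpa using coeff_derivative_of_coeff_eq hp) (fun _ => mul_apply_add_one_eq_zero_of_neg hg)]
  have hshift : (n : ℤ) - (m + 1 : ℕ) + 1 = n - m := by push_cast; ring
  rw [hshift]
  push_cast
  ring

end Polynomial

theorem gam_eq_zero_of_neg : ∀ (k : ℕ) {i : ℤ}, i < 0 → gam k i = 0
  | 0, i, h => by rw [gam, if_neg (by omega)]
  | k + 1, i, h => by
    simp only [gam]
    rw [gam_eq_zero_of_neg k (by omega), gam_eq_zero_of_neg k (by omega),
      gam_eq_zero_of_neg k (by omega)]
    ring

theorem gam_eq_zero_of_lt : ∀ (k : ℕ) {i : ℤ}, 3 * k < i → gam k i = 0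
  | 0, i, h => by rw [gam, if_neg (by omega)]
  | k + 1, i, h => by
    simp only [gam]
    rw [gam_eq_zero_of_lt k (by omega), gam_eq_zero_of_lt k (by omega),
      gam_eq_zero_of_lt k (by omega)]
    ring

theorem coeff_gammaPoly (k n : ℕ) : (gammaPoly k).coeff n = (gam k n : ℚ) := by
  simp only [gammaPoly, finsetSum_coeff, coeff_C_mul, coeff_X_pow, mul_ite, mul_one, mul_zero,
    Finset.sum_ite_eq, Finset.mem_range]
  split_ifs with h
  · rfl
  · rw [gam_eq_zero_of_lt k (by omega), Int.cast_zero]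

theorem cast_c2 (m : ℤ) : (c2 m : ℚ) = m * (m - 1) / 2 := by
  rw [c2, Int.cast_div_charZero (Int.even_mul_pred_self m).two_dvd]
  push_cast
  ring

theorem gammaPoly_recurrence (k : ℕ) :
    gammaPoly (k + 1) =
      (Polynomial.C (((k : ℚ) * (k + 1)) / 2) - Polynomial.C (k : ℚ) * X + X ^ 2) * X *
          gammaPoly k
        - (Polynomial.C (k : ℚ) + Polynomial.C ((k : ℚ) - 2) * X - 2 * X ^ 2) * X ^ 2 *
          (gammaPoly k).derivative
        + Polynomial.C ((1 : ℚ) / 2) * (1 + X) ^ 2 * X ^ 3 *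
          ((gammaPoly k).derivative.derivative) := by
  have hp := coeff_gammaPoly k
  have hg : ∀ i < 0, (gam k i : ℚ) = 0 := fun i hi => by rw [gam_eq_zero_of_neg k hi, Int.cast_zero]
  set P := gammaPoly k
  -- Exponents are written as `m + 1`, `m + 2` so that the coefficient lemmas match, and
  -- `C (1/2) * 2` is kept unsimplified since `ring` cannot cancel it inside `C`.
  have hrhs :
      (C ((k : ℚ) * (k + 1) / 2) - C (k : ℚ) * X + X ^ 2) * X * P
        - (C (k : ℚ) + C ((k : ℚ) - 2) * X - 2 * X ^ 2) * X ^ 2 * derivative P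
        + C ((1 : ℚ) / 2) * (1 + X) ^ 2 * X ^ 3 * derivative (derivative P)
      = C ((k : ℚ) * (k + 1) / 2) * (P * X ^ 1) - C (k : ℚ) * (P * X ^ 2) + P * X ^ 3
        - C (k : ℚ) * (derivative P * X ^ (1 + 1)) - C ((k : ℚ) - 2) * (derivative P * X ^ (2 + 1))
        + 2 * (derivative P * X ^ (3 + 1))
        + C ((1 : ℚ) / 2) * (derivative (derivative P) * X ^ (1 + 2))
        + C ((1 : ℚ) / 2) * (2 * (derivative (derivative P) * X ^ (2 + 2)))
        + C ((1 : ℚ) / 2) * (derivative (derivative P) * X ^ (3 + 2)) := by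
    ring
  rw [hrhs]
  ext n
  simp only [coeff_add, coeff_sub, coeff_C_mul, coeff_ofNat_mul, coeff_gammaPoly,
    coeff_mul_X_pow_of_coeff_eq hp hg, coeff_derivative_mul_X_pow_succ_of_coeff_eq hp hg,
    coeff_derivative_derivative_mul_X_pow_add_two_of_coeff_eq hp hg]
  rw [gam]
  push_cast [cast_c2]
  ring
end

section
/- For every n ≥ 1, LS(n+3, n) = 8·(280·C(n+4, 9) + 448·C(n+4, 8) + 219·C(n+4, 7) + 34·C(n+4, 6) + C(n+4, 5)), where C(·,·) is the usual binomial coefficient. -/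
/-!
Along each diagonal `k = n - j` the recurrence reads
`LS (n + j + 1) (n + 1) = LS (n + j) n + (n + 1) (n + 2) LS (n + j) (n + 1)`, so by induction on `n`,
starting from `LS n n = 1`, each `LS (n + j) n` is a polynomial in `n` of degree `3 j`, obtained
from the previous diagonal by a discrete integration. For `j = 3` the polynomial is compared with
the binomial side by writing `C(n + 4, k) = (n + 4)(n + 3) ⋯ (n + 5 - k) / k!`, which holds for all
`n` since the product vanishes when `n + 4 < k`.
-/

/-- Legendre-Stirling numbers of the second kind. -/
def LS : ℕ → ℕ → ℕ
  | 0, 0 => 1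
  | 0, _ + 1 => 0
  | _ + 1, 0 => 0
  | n + 1, k + 1 => LS n k + (k + 1) * (k + 2) * LS n (k + 1)

open Polynomial

theorem LS_succ_succ (n k : ℕ) :
    LS (n + 1) (k + 1) = LS n k + (k + 1) * (k + 2) * LS n (k + 1) :=
  rfl

theorem LS_eq_zero_of_lt {n k : ℕ} (h : n < k) : LS n k = 0 := by
  induction n generalizing k with
  | zero => obtain ⟨k, rfl⟩ := Nat.exists_eq_succ_of_ne_zero (by omega : k ≠ 0); rfl
  | succ n ih =>
    obtain ⟨k, rfl⟩ := Nat.exists_eq_succ_of_ne_zero (by omega : k ≠ 0)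
    rw [LS_succ_succ, ih (by omega), ih (by omega), mul_zero, add_zero]

theorem LS_self (n : ℕ) : LS n n = 1 := by
  induction n with
  | zero => rfl
  | succ n ih => rw [LS_succ_succ, ih, LS_eq_zero_of_lt n.lt_succ_self, mul_zero, add_zero]

theorem LS_add_one_self (n : ℕ) : (LS (n + 1) n : ℚ) = n * (n + 1) * (n + 2) / 3 := by
  induction n with
  | zero => norm_num [LS]
  | succ n ih =>
    rw [LS_succ_succ, LS_self]
    push_cast
    linear_combination ih

theorem LS_add_two_self (n : ℕ) :
    (LS (n + 2) n : ℚ) =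
      (6 * n + 65 * n ^ 2 + 135 * n ^ 3 + 110 * n ^ 4 + 39 * n ^ 5 + 5 * n ^ 6) / 90 := by
  induction n with
  | zero => norm_num [LS]
  | succ n ih =>
    have h := LS_add_one_self (n + 1)
    rw [LS_succ_succ]
    push_cast at h ⊢
    linear_combination ih + ((n : ℚ) + 1) * (n + 2) * h

theorem LS_add_three_self (n : ℕ) :
    (LS (n + 3) n : ℚ) =
      (-144 * n + 252 * n ^ 2 + 5068 * n ^ 3 + 13041 * n ^ 4 + 14784 * n ^ 5 + 8883 * n ^ 6 +
        2937 * n ^ 7 + 504 * n ^ 8 + 35 * n ^ 9) / 5670 := by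
  induction n with
  | zero => norm_num [LS]
  | succ n ih =>
    have h := LS_add_two_self (n + 1)
    rw [LS_succ_succ]
    push_cast at h ⊢
    linear_combination ih + ((n : ℚ) + 1) * (n + 2) * h

theorem LS_add_three_general (n : ℕ) :
    LS (n + 3) n =
      8 * (280 * Nat.choose (n + 4) 9 + 448 * Nat.choose (n + 4) 8 +
        219 * Nat.choose (n + 4) 7 + 34 * Nat.choose (n + 4) 6 + Nat.choose (n + 4) 5) := by
  suffices h : (LS (n + 3) n : ℚ) =
      8 * (280 * Nat.choose (n + 4) 9 + 448 * Nat.choose (n + 4) 8 +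
        219 * Nat.choose (n + 4) 7 + 34 * Nat.choose (n + 4) 6 + Nat.choose (n + 4) 5) by
    exact_mod_cast h
  simp only [Nat.cast_choose_eq_descPochhammer_div, descPochhammer_succ_eval,
    descPochhammer_zero, eval_one, LS_add_three_self, Nat.factorial, Nat.cast_ofNat]
  push_cast
  ring

theorem LS_add_three (n : ℕ) (hn : 1 ≤ n) :
    LS (n + 3) n =
      8 * (280 * Nat.choose (n + 4) 9 + 448 * Nat.choose (n + 4) 8 +
        219 * Nat.choose (n + 4) 7 + 34 * Nat.choose (n + 4) 6 + Nat.choose (n + 4) 5) :=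
  LS_add_three_general n
end
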